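/- PELT pruning lemma: assume the cost function C satisfies C(y_{(t+1):s}) + C(y_{(s+1):M}) + K ≤ C(y_{(t+1):M}) for all t < s < M. If F(t) + C(y_{(t+1):s}) + K ≥ F(s), then for every M > s, F(t) + C(y_{(t+1):M}) ≥ F(s) + C(y_{(s+1):M}); hence t can never be the optimal last change-point prior to M. -/
import Mathlib


theorem pelt_pruning (T : ℕ) (C : ℕ → ℕ → ℝ) (K : ℝ) (F : ℕ → ℝ)
    (hC : ∀ t s M : ℕ, t < s → s < M → M ≤ T → C t s + C s M + K ≤ C t M)
    (t s : ℕ) (hts : t < s) (hsT : s ≤ T)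
    (hF : F s ≤ F t + C t s + K) :
    ∀ M : ℕ, s < M → M ≤ T → F s + C s M ≤ F t + C t M := by
  intro M hsM hMT
  have := hC t s M hts hsM hMT
  linarith
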